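/- Fix n, d, s ∈ ℕ with n ≥ 1, s even, 2 ≤ s ≤ d, and fix ε > 0 and σ > 0. Assume 2n·log 2 + log 2 ≤ (1/2) · log(C(d,s) · C(s, s/2)). Then there exists ε' > 0 such that for every measurable estimator β̂ : ℝ^{n×d} × ℝ^n → ℝ^d whose values lie in F₃(d,s,ε), under the joint law in which β* is uniform on F₃(d,s,ε), X ∈ ℝ^{n×d} has i.i.d. entries gaussianReal 0 (1/n), e ∈ ℝ^n has i.i.d. entries gaussianReal 0 σ², and β*, X, e are mutually independent, the probability that ‖β̂(X, sign(X·β* + e))/‖β̂(X, sign(X·β* + e))‖ − β*/‖β*‖‖ ≥ ε' is at least 1/2. -/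

import Mathlib

/-!
For fixed `(X, e)` the observation `sign (X β + e)` takes at most `2 ^ n` values, so an estimator
with values in `F₃` returns `β` itself for at most `2 ^ n` of the
`≥ C(d, s) C(s, s/2) ≥ 2 ^ (n + 1)` elements of `F₃`: under the uniform prior it is exact with
conditional probability at most `1 / 2`. All elements of `F₃` have the same norm, so normalization
is injective on `F₃`, and any wrong answer is off by at least the least distance `ε'` between
distinct normalized elements of `F₃`.
-/

open MeasureTheory ProbabilityTheory Real
open scoped ENNReal NNReal

/-- The sign function, with `sign x = 1` for `x ≥ 0` and `-1` otherwise. -/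
noncomputable def signFun (x : ℝ) : ℝ := if 0 ≤ x then 1 else -1

/-- The Euclidean (`ℓ₂`) norm of a vector. -/
noncomputable def l2norm {d : ℕ} (v : Fin d → ℝ) : ℝ := Real.sqrt (∑ i, v i ^ 2)

/-- The restricted ensemble `F₃(d,s,ε)` for one-bit compressed sensing. -/
noncomputable def F3 (d s : ℕ) (ε : ℝ) : Set (Fin d → ℝ) :=
  {β | ∃ A B : Finset (Fin d), Disjoint A B ∧ A.card = s / 2 ∧ B.card = s / 2 ∧
    (∀ i ∈ A, β i = -ε) ∧ (∀ i ∈ B, β i = Real.sqrt (2 / s) + ε) ∧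
    ∀ i ∉ A ∪ B, β i = 0}


section UniformPrior

variable {α Ω Y : Type*} [MeasurableSpace α] [MeasurableSpace Ω]

lemma MeasureTheory.Measure.prod_apply_le_of_forall_slice_le (μ : Measure α) [SFinite μ]
    (ν : Measure Ω) [IsProbabilityMeasure ν] {S : Set (α × Ω)} (hS : MeasurableSet S)
    {c : ℝ≥0∞} (h : ∀ ω, μ ((·, ω) ⁻¹' S) ≤ c) : μ.prod ν S ≤ c :=
  calc μ.prod ν S = ∫⁻ ω, μ ((·, ω) ⁻¹' S) ∂ν := Measure.prod_apply_symm hS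
    _ ≤ ∫⁻ _, c ∂ν := lintegral_mono h
    _ = c := by rw [lintegral_const, measure_univ, mul_one]

variable [MeasurableSingletonClass α] [Finite Y]

lemma ProbabilityTheory.uniformOn_le_of_inter_subset_range {F T : Set α} (hF : F.Finite)
    (g : Y → α) (hT : F ∩ T ⊆ Set.range g) : uniformOn F T ≤ Nat.card Y / F.ncard := by
  have hcount : ∀ {A : Set α}, A.Finite → Measure.count A = A.ncard := fun hA => by
    rw [Measure.count_apply_finite _ hA, Set.ncard_eq_toFinset_card _ hA]
  have hrange : (Set.range g).ncard ≤ Nat.card Y := by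
    rw [← Nat.card_coe_set_eq]; exact Finite.card_range_le g
  rw [uniformOn, cond_apply hF.measurableSet, hcount hF, ENNReal.div_eq_inv_mul]
  gcongr
  calc Measure.count (F ∩ T) ≤ Measure.count (Set.range g) := measure_mono hT
    _ = (Set.range g).ncard := hcount (Set.finite_range g)
    _ ≤ Nat.card Y := by exact_mod_cast hrange

theorem ProbabilityTheory.uniformOn_prod_le_of_subset_range {F : Set α} (hF : F.Finite)
    (ν : Measure Ω) [IsProbabilityMeasure ν] (g : Ω → Y → α) {S : Set (α × Ω)}
    (hS : MeasurableSet S) (hSg : ∀ a ∈ F, ∀ ω, (a, ω) ∈ S → a ∈ Set.range (g ω)) :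
    (uniformOn F).prod ν S ≤ Nat.card Y / F.ncard :=
  Measure.prod_apply_le_of_forall_slice_le _ ν hS fun ω =>
    uniformOn_le_of_inter_subset_range hF (g ω) fun a ha => hSg a ha.1 ω ha.2

end UniformPrior

lemma Set.Finite.exists_pos_forall_le_of_pos {α : Type*} {F : Set α} (hF : F.Finite)
    {D : α → α → ℝ} (hD : ∀ a ∈ F, ∀ b ∈ F, a ≠ b → 0 < D a b) :
    ∃ δ > 0, ∀ a ∈ F, ∀ b ∈ F, a ≠ b → δ ≤ D a b := by
  classical
  set t := insert 1 (hF.offDiag.toFinset.image fun p => D p.1 p.2)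
  have hoff : ∀ a ∈ F, ∀ b ∈ F, a ≠ b → D a b ∈ t := fun a ha b hb hab =>
    Finset.mem_insert_of_mem <| Finset.mem_image_of_mem (fun p => D p.1 p.2) (a := (a, b))
      (hF.offDiag.mem_toFinset.2 ⟨ha, hb, hab⟩)
  refine ⟨t.min' (Finset.insert_nonempty _ _), ?_, fun a ha b hb hab =>
    t.min'_le _ (hoff a ha b hb hab)⟩
  rw [gt_iff_lt, Finset.lt_min'_iff]
  simp only [t, Finset.mem_insert, Finset.mem_image, Set.Finite.mem_toFinset, Set.mem_offDiag]
  rintro _ (rfl | ⟨⟨a, b⟩, ⟨ha, hb, hab⟩, rfl⟩)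
  exacts [one_pos, hD a ha b hb hab]

lemma measurable_signFun : Measurable signFun :=
  Measurable.ite measurableSet_Ici measurable_const measurable_const

lemma continuous_l2norm {d : ℕ} : Continuous (l2norm (d := d)) := by
  unfold l2norm; fun_prop

lemma l2norm_pos {d : ℕ} {v : Fin d → ℝ} (hv : v ≠ 0) : 0 < l2norm v := by
  obtain ⟨i, hi⟩ := Function.ne_iff.1 hv
  exact Real.sqrt_pos.2 <|
    Finset.sum_pos' (fun j _ => sq_nonneg (v j)) ⟨i, Finset.mem_univ i, sq_pos_of_ne_zero hi⟩

noncomputable def l2normalize {d : ℕ} (v : Fin d → ℝ) : Fin d → ℝ := fun i => v i / l2norm v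

lemma measurable_l2normalize {d : ℕ} : Measurable (l2normalize (d := d)) :=
  measurable_pi_lambda _ fun i => (measurable_pi_apply i).div continuous_l2norm.measurable

noncomputable def oneBitObs {n d : ℕ} (X : Fin n → Fin d → ℝ) (e : Fin n → ℝ)
    (β : Fin d → ℝ) : Fin n → ℝ :=
  fun k => signFun ((∑ j, X k j * β j) + e k)

lemma oneBitObs_mem_range {n d : ℕ} (X : Fin n → Fin d → ℝ) (e : Fin n → ℝ)
    (β : Fin d → ℝ) :
    oneBitObs X e β ∈ Set.range fun b : Fin n → Bool => fun k => if b k then (1 : ℝ) else -1 :=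
  ⟨fun k => decide (0 ≤ (∑ j, X k j * β j) + e k), by ext k; simp [oneBitObs, signFun]⟩

lemma measurable_oneBitObs {n d : ℕ} :
    Measurable fun ω : (Fin d → ℝ) × (Fin n → Fin d → ℝ) × (Fin n → ℝ) =>
      oneBitObs ω.2.1 ω.2.2 ω.1 :=
  measurable_pi_lambda _ fun k => measurable_signFun.comp (by fun_prop)

noncomputable def oneBitError {n d : ℕ} (est : (Fin n → Fin d → ℝ) × (Fin n → ℝ) → Fin d → ℝ)
    (ω : (Fin d → ℝ) × (Fin n → Fin d → ℝ) × (Fin n → ℝ)) : ℝ :=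
  l2norm (l2normalize (est (ω.2.1, oneBitObs ω.2.1 ω.2.2 ω.1)) - l2normalize ω.1)

lemma measurable_oneBitError {n d : ℕ} {est : (Fin n → Fin d → ℝ) × (Fin n → ℝ) → Fin d → ℝ}
    (hest : Measurable est) : Measurable (oneBitError est) :=
  continuous_l2norm.measurable.comp <|
    (measurable_l2normalize.comp (hest.comp (measurable_snd.fst.prodMk measurable_oneBitObs))).sub
      (measurable_l2normalize.comp measurable_fst)

/-- An error below the separation `δ` of `F` forces exact recovery `est (X, y) = β`, and the
observation `y` takes at most `2 ^ n` values. -/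
theorem uniformOn_prod_oneBitError_lt_le {n d : ℕ} {F : Set (Fin d → ℝ)} (hF : F.Finite)
    {δ : ℝ} (hsep : ∀ a ∈ F, ∀ b ∈ F, a ≠ b → δ ≤ l2norm (l2normalize a - l2normalize b))
    (ν : Measure ((Fin n → Fin d → ℝ) × (Fin n → ℝ))) [IsProbabilityMeasure ν]
    {est : (Fin n → Fin d → ℝ) × (Fin n → ℝ) → Fin d → ℝ} (hest : Measurable est)
    (hrange : ∀ x, est x ∈ F) :
    (uniformOn F).prod ν {ω | oneBitError est ω < δ} ≤ 2 ^ n / F.ncard := by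
  have hrec : ∀ β ∈ F, ∀ xe, (β, xe) ∈ {ω | oneBitError est ω < δ} →
      β ∈ Set.range fun b : Fin n → Bool => est (xe.1, fun k => if b k then 1 else -1) := by
    intro β hβ xe hlt
    have hexact : est (xe.1, oneBitObs xe.1 xe.2 β) = β := by
      by_contra hne
      exact (hsep _ (hrange _) β hβ hne).not_gt hlt
    obtain ⟨b, hb⟩ := oneBitObs_mem_range xe.1 xe.2 β
    exact ⟨b, by simp only [hb, hexact]⟩
  simpa using uniformOn_prod_le_of_subset_range hF ν _
    (measurableSet_lt (measurable_oneBitError hest) measurable_const) hrec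

section Ensemble

variable {d s : ℕ} {ε : ℝ}

lemma F3_finite (d s : ℕ) (ε : ℝ) : (F3 d s ε).Finite := by
  refine (Set.Finite.pi (t := fun _ : Fin d => {-ε, √(2 / s) + ε, 0})
    fun _ => Set.toFinite _).subset ?_
  rintro β ⟨A, B, -, -, -, hA, hB, h0⟩ i -
  by_cases hiA : i ∈ A
  · exact Or.inl (hA i hiA)
  by_cases hiB : i ∈ B
  · exact Or.inr (Or.inl (hB i hiB))
  · exact Or.inr (Or.inr (h0 i (by simp [hiA, hiB])))

lemma sum_sq_of_mem_F3 {β : Fin d → ℝ} (hβ : β ∈ F3 d s ε) :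
    ∑ i, β i ^ 2 = (s / 2 : ℕ) * (ε ^ 2 + (√(2 / s) + ε) ^ 2) := by
  obtain ⟨A, B, hAB, hAcard, hBcard, hA, hB, h0⟩ := hβ
  have hsupp : ∑ i, β i ^ 2 = ∑ i ∈ A ∪ B, β i ^ 2 :=
    (Finset.sum_subset (Finset.subset_univ _) fun i _ hi => by simp [h0 i hi]).symm
  have hAsum : ∑ i ∈ A, β i ^ 2 = ∑ _i ∈ A, ε ^ 2 :=
    Finset.sum_congr rfl fun i hi => by rw [hA i hi, neg_sq]
  have hBsum : ∑ i ∈ B, β i ^ 2 = ∑ _i ∈ B, (√(2 / s) + ε) ^ 2 :=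
    Finset.sum_congr rfl fun i hi => by rw [hB i hi]
  rw [hsupp, Finset.sum_union hAB, hAsum, hBsum, Finset.sum_const, Finset.sum_const, hAcard,
    hBcard, nsmul_eq_mul, nsmul_eq_mul, mul_add]

lemma l2norm_pos_of_mem_F3 (hε : 0 < ε) (hs : 2 ≤ s) {β : Fin d → ℝ} (hβ : β ∈ F3 d s ε) :
    0 < l2norm β := by
  have hhalf : (1 : ℝ) ≤ (s / 2 : ℕ) := by exact_mod_cast (by omega : 1 ≤ s / 2)
  rw [l2norm, sum_sq_of_mem_F3 hβ]
  positivity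

lemma injOn_l2normalize_F3 (hε : 0 < ε) (hs : 2 ≤ s) :
    Set.InjOn l2normalize (F3 d s ε) := by
  intro β hβ β' hβ' h
  have hnorm : l2norm β' = l2norm β := by rw [l2norm, l2norm, sum_sq_of_mem_F3 hβ,
    sum_sq_of_mem_F3 hβ']
  ext i
  have hi := congrFun h i
  rwa [l2normalize, l2normalize, hnorm, div_left_inj' (l2norm_pos_of_mem_F3 hε hs hβ).ne'] at hi

lemma l2norm_l2normalize_sub_pos_of_mem_F3 (hε : 0 < ε) (hs : 2 ≤ s) {β β' : Fin d → ℝ}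
    (hβ : β ∈ F3 d s ε) (hβ' : β' ∈ F3 d s ε) (hne : β ≠ β') :
    0 < l2norm (l2normalize β - l2normalize β') :=
  l2norm_pos <| sub_ne_zero.2 fun h => hne (injOn_l2normalize_F3 hε hs hβ hβ' h)

end Ensemble

section Counting

variable {d : ℕ}

noncomputable def ensembleVector (a b : ℝ) (S B : Finset (Fin d)) : Fin d → ℝ :=
  fun i => if i ∈ B then a else if i ∈ S then b else 0

lemma ensembleVector_injOn {a b : ℝ} (ha : a ≠ 0) (hb : b ≠ 0) (hab : a ≠ b)
    {S B S' B' : Finset (Fin d)} (hB : B ⊆ S) (hB' : B' ⊆ S')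
    (h : ensembleVector a b S B = ensembleVector a b S' B') : S = S' ∧ B = B' := by
  have decode : ∀ {S B : Finset (Fin d)}, B ⊆ S → ∀ i,
      (i ∈ B ↔ ensembleVector a b S B i = a) ∧ (i ∈ S ↔ ensembleVector a b S B i ≠ 0) := by
    intro S B hB i
    by_cases hiB : i ∈ B
    · simp [ensembleVector, hiB, hB hiB, ha]
    by_cases hiS : i ∈ S <;> simp [ensembleVector, hiB, hiS, hb, hab.symm, ha.symm]
  constructor <;> ext i
  · rw [(decode hB i).2, (decode hB' i).2, h]
  · rw [(decode hB i).1, (decode hB' i).1, h]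

variable {s : ℕ} {ε : ℝ}

lemma ensembleVector_mem_F3 (heven : Even s) {S B : Finset (Fin d)} (hB : B ⊆ S)
    (hS : S.card = s) (hBcard : B.card = s / 2) :
    ensembleVector (√(2 / s) + ε) (-ε) S B ∈ F3 d s ε := by
  refine ⟨S \ B, B, Finset.sdiff_disjoint, ?_, hBcard, fun i hi => ?_, fun i hi => ?_,
    fun i hi => ?_⟩
  · rw [Finset.card_sdiff_of_subset hB, hS, hBcard]
    obtain ⟨k, rfl⟩ := heven
    omega
  · rw [Finset.mem_sdiff] at hi
    simp [ensembleVector, hi.1, hi.2]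
  · simp [ensembleVector, hi]
  · have hiB : i ∉ B := fun h => hi (Finset.mem_union_right _ h)
    have hiS : i ∉ S := fun h => hi (Finset.mem_union_left _ (Finset.mem_sdiff.2 ⟨h, hiB⟩))
    simp [ensembleVector, hiB, hiS]

/-- Choosing the support `S` and then its positive half `B` gives distinct elements of `F₃`. -/
lemma choose_mul_choose_le_ncard_F3 (hε : 0 < ε) (heven : Even s) :
    d.choose s * s.choose (s / 2) ≤ (F3 d s ε).ncard := by
  classical
  set P := (Finset.univ.powersetCard s).sigma fun S : Finset (Fin d) => S.powersetCard (s / 2)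
  have hmemP : ∀ p ∈ P, p.2 ⊆ p.1 ∧ p.1.card = s ∧ p.2.card = s / 2 := by
    intro p hp
    simp only [P, Finset.mem_sigma, Finset.mem_powersetCard] at hp
    exact ⟨hp.2.1, hp.1.2, hp.2.2⟩
  have hPcard : P.card = d.choose s * s.choose (s / 2) := by
    rw [Finset.card_sigma, Finset.sum_congr rfl fun S hS => by
      rw [Finset.card_powersetCard, (Finset.mem_powersetCard.1 hS).2]]
    simp
  have hpos : 0 < √(2 / s) + ε := by positivity
  calc d.choose s * s.choose (s / 2)
        = (P : Set ((_ : Finset (Fin d)) × Finset (Fin d))).ncard := by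
          rw [Set.ncard_coe_finset, hPcard]
    _ ≤ (F3 d s ε).ncard := by
      refine Set.ncard_le_ncard_of_injOn (fun p => ensembleVector (√(2 / s) + ε) (-ε) p.1 p.2)
        (fun p hp => ?_) (fun p hp q hq h => ?_) (F3_finite d s ε)
      · obtain ⟨hB, hS, hBcard⟩ := hmemP p hp
        exact ensembleVector_mem_F3 heven hB hS hBcard
      · obtain ⟨hS, hB⟩ := ensembleVector_injOn hpos.ne' (neg_ne_zero.2 hε.ne')
          (by linarith) (hmemP p hp).1 (hmemP q hq).1 h
        exact Sigma.ext hS (heq_of_eq hB)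

end Counting

lemma two_pow_succ_le_of_log_le {n M : ℕ} (hM : 0 < M)
    (h : 2 * (n : ℝ) * log 2 + log 2 ≤ (1 / 2) * log M) : 2 ^ (n + 1) ≤ M := by
  have hlog2 : 0 < log 2 := log_pos one_lt_two
  have hlogM : 0 ≤ log M := log_nonneg (by exact_mod_cast hM)
  have hlog : log ((2 : ℝ) ^ (n + 1)) ≤ log M := by
    rw [log_pow]; push_cast; nlinarith [(n.cast_nonneg : (0 : ℝ) ≤ n)]
  exact_mod_cast (log_le_log_iff (by positivity) (by exact_mod_cast hM)).1 hlog

lemma ENNReal.natCast_div_le_half {a b : ℕ} (h : 2 * a ≤ b) : (a : ℝ≥0∞) / b ≤ 1 / 2 := by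
  refine ENNReal.div_le_of_le_mul ?_
  calc (a : ℝ≥0∞) = 1 / 2 * (2 * a) := by
        rw [← mul_assoc, one_div, ENNReal.inv_mul_cancel two_ne_zero ENNReal.ofNat_ne_top,
          one_mul]
    _ ≤ 1 / 2 * b := by gcongr; exact_mod_cast h

theorem onebit_cs_approximate_recovery_lower_bound_general
    (n d s : ℕ) (heven : Even s) (hs2 : 2 ≤ s) (hsd : s ≤ d)
    (ε σ : ℝ) (hε : 0 < ε)
    (hbound : 2 * (n : ℝ) * Real.log 2 + Real.log 2 ≤
      (1 / 2) * Real.log ((d.choose s : ℝ) * (s.choose (s / 2) : ℝ))) :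
    ∃ ε' > (0 : ℝ),
      ∀ est : (Fin n → Fin d → ℝ) × (Fin n → ℝ) → (Fin d → ℝ),
        Measurable est → (∀ x, est x ∈ F3 d s ε) →
        (1 / 2 : ℝ≥0∞) ≤
          ((uniformOn (F3 d s ε)).prod
              ((Measure.pi fun _ : Fin n => Measure.pi fun _ : Fin d =>
                  gaussianReal 0 (1 / (n : ℝ≥0))).prod
                (Measure.pi fun _ : Fin n => gaussianReal 0 ⟨σ ^ 2, sq_nonneg σ⟩)))
            {ω : (Fin d → ℝ) × ((Fin n → Fin d → ℝ) × (Fin n → ℝ)) |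
              l2norm (fun i =>
                  est (ω.2.1, fun k => signFun ((∑ j, ω.2.1 k j * ω.1 j) + ω.2.2 k)) i /
                    l2norm (est (ω.2.1, fun k => signFun ((∑ j, ω.2.1 k j * ω.1 j) + ω.2.2 k))) -
                  ω.1 i / l2norm ω.1) ≥ ε'} := by
  have hF := F3_finite d s ε
  have hcard : 2 * 2 ^ n ≤ (F3 d s ε).ncard := by
    rw [← pow_succ']
    refine (two_pow_succ_le_of_log_le (Nat.mul_pos (Nat.choose_pos hsd)
      (Nat.choose_pos (Nat.div_le_self s 2))) (by exact_mod_cast hbound)).trans ?_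
    exact choose_mul_choose_le_ncard_F3 hε heven
  have := isProbabilityMeasure_uniformOn hF (Set.nonempty_of_ncard_ne_zero
    (lt_of_lt_of_le (by positivity) hcard).ne')
  obtain ⟨ε', hε', hsep⟩ := hF.exists_pos_forall_le_of_pos fun β hβ β' hβ' =>
    l2norm_l2normalize_sub_pos_of_mem_F3 hε hs2 hβ hβ'
  refine ⟨ε', hε', fun est hest hrange => ?_⟩
  -- Instance search does not see through the anonymous constructor `⟨σ ^ 2, _⟩`.
  have : IsProbabilityMeasure (gaussianReal 0 ⟨σ ^ 2, sq_nonneg σ⟩) :=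
    instIsProbabilityMeasureGaussianReal _ _
  change 1 / 2 ≤ (uniformOn (F3 d s ε)).prod _ {ω | ε' ≤ oneBitError est ω}
  rw [← compl_compl {ω | ε' ≤ oneBitError est ω},
    prob_compl_eq_one_sub (measurableSet_le measurable_const (measurable_oneBitError hest)).compl]
  simp only [Set.compl_ofPred, not_le]
  calc (1 / 2 : ℝ≥0∞) = 1 - 1 / 2 := by rw [one_div, ENNReal.one_sub_inv_two]
    _ ≤ _ := tsub_le_tsub_left ((uniformOn_prod_oneBitError_lt_le hF hsep _ hest hrange).trans
      (by exact_mod_cast ENNReal.natCast_div_le_half hcard)) 1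

theorem onebit_cs_approximate_recovery_lower_bound
    (n d s : ℕ) (hn : 1 ≤ n) (heven : Even s) (hs2 : 2 ≤ s) (hsd : s ≤ d)
    (ε σ : ℝ) (hε : 0 < ε) (hσ : 0 < σ)
    (hbound : 2 * (n : ℝ) * Real.log 2 + Real.log 2 ≤
      (1 / 2) * Real.log ((d.choose s : ℝ) * (s.choose (s / 2) : ℝ))) :
    ∃ ε' > (0 : ℝ),
      ∀ est : (Fin n → Fin d → ℝ) × (Fin n → ℝ) → (Fin d → ℝ),
        Measurable est → (∀ x, est x ∈ F3 d s ε) →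
        (1 / 2 : ℝ≥0∞) ≤
          ((uniformOn (F3 d s ε)).prod
              ((Measure.pi fun _ : Fin n => Measure.pi fun _ : Fin d =>
                  gaussianReal 0 (1 / (n : ℝ≥0))).prod
                (Measure.pi fun _ : Fin n => gaussianReal 0 ⟨σ ^ 2, sq_nonneg σ⟩)))
            {ω : (Fin d → ℝ) × ((Fin n → Fin d → ℝ) × (Fin n → ℝ)) |
              l2norm (fun i =>
                  est (ω.2.1, fun k => signFun ((∑ j, ω.2.1 k j * ω.1 j) + ω.2.2 k)) i /
                    l2norm (est (ω.2.1, fun k => signFun ((∑ j, ω.2.1 k j * ω.1 j) + ω.2.2 k))) -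
                  ω.1 i / l2norm ω.1) ≥ ε'} :=
  onebit_cs_approximate_recovery_lower_bound_general n d s heven hs2 hsd ε σ hε hbound
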